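/- Let K be a number field, let X/K be a complete nonsingular curve of genus 1, let f : X → X be a morphism of degree d ≥ 2 defined over K, and let α ∈ X(K). Then the Minkowski dimension dim(G_{f,α}) exists and dim(G_{f,α}) = 0. -/

import Mathlib

open scoped Classical

noncomputable section

/-! ### Minkowski dimension machinery for groups of automorphisms of rooted trees

A rooted tree is presented by its levels `V 0, V 1, V 2, …` (with `V 0` the root level)
together with parent maps `V (n+1) → V n`.  An automorphism is a family of permutations
of the levels commuting with the parent maps; it is in particular determined by a point of
`∀ k, Equiv.Perm (V k)`.  The restriction `r_n σ` of `σ` to the height-`n` subtree is the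
tuple `(σ 0, …, σ n)`, and the natural metric is
`d(σ,τ) = inf { d!^{-(dⁿ-1)/(d-1)} : r_n σ = r_n τ }`. -/

/-- The exponent `(dⁿ - 1)/(d - 1) = 1 + d + ⋯ + d^(n-1)`. -/
def scaleExp (d n : ℕ) : ℕ := ∑ i ∈ Finset.range n, d ^ i

/-- The scale `ε_n = d!^{-(dⁿ-1)/(d-1)}`, i.e. `1/|Aut(Tₙᶜᵒᵐ)|`. -/
def treeScale (d n : ℕ) : ℝ := ((d.factorial : ℝ) ^ scaleExp d n)⁻¹

/-- Two families of level permutations restrict to the same automorphism of the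
height-`n` subtree. -/
def AgreeUpTo {V : ℕ → Type*} (n : ℕ) (σ τ : ∀ k, Equiv.Perm (V k)) : Prop :=
  ∀ k, k ≤ n → σ k = τ k

/-- The natural metric on automorphisms of a rooted `d`-ary tree:
`d(σ,τ) = inf { d!^{-(dⁿ-1)/(d-1)} : σ and τ agree on the height-n subtree }`. -/
def treeDist {V : ℕ → Type*} (d : ℕ) (σ τ : ∀ k, Equiv.Perm (V k)) : ℝ :=
  sInf {x : ℝ | ∃ n : ℕ, AgreeUpTo n σ τ ∧ x = treeScale d n}

/-- `N_{ε_n}(G)`: the least number of balls of radius `ε_n = treeScale d n` needed to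
cover `G`. -/
def coverNum {V : ℕ → Type*} (d : ℕ) (G : Set (∀ k, Equiv.Perm (V k))) (n : ℕ) : ℕ :=
  sInf {m : ℕ | ∃ s : Finset (∀ k, Equiv.Perm (V k)), s.card = m ∧
    G ⊆ ⋃ σ ∈ s, {τ | treeDist d σ τ ≤ treeScale d n}}

/-- The lower Minkowski dimension `liminf_{ε → 0} log N_ε(G) / log (1/ε)` (computed
along the scales `ε_n` of the metric). -/
def dimLower {V : ℕ → Type*} (d : ℕ) (G : Set (∀ k, Equiv.Perm (V k))) : ℝ :=
  Filter.liminf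
    (fun n : ℕ => Real.log (coverNum d G n : ℝ) / Real.log (1 / treeScale d n)) Filter.atTop

/-- The upper Minkowski dimension `limsup_{ε → 0} log N_ε(G) / log (1/ε)` (computed
along the scales `ε_n` of the metric). -/
def dimUpper {V : ℕ → Type*} (d : ℕ) (G : Set (∀ k, Equiv.Perm (V k))) : ℝ :=
  Filter.limsup
    (fun n : ℕ => Real.log (coverNum d G n : ℝ) / Real.log (1 / treeScale d n)) Filter.atTop

/-- The Minkowski dimension of `G` exists and equals `x`. -/
def HasDim {V : ℕ → Type*} (d : ℕ) (G : Set (∀ k, Equiv.Perm (V k))) (x : ℝ) : Prop :=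
  dimLower d G = x ∧ dimUpper d G = x

/-- `G` is closed for the natural metric. -/
def IsDistClosed {V : ℕ → Type*} (d : ℕ) (G : Set (∀ k, Equiv.Perm (V k))) : Prop :=
  ∀ σ, (∀ ε : ℝ, 0 < ε → ∃ τ ∈ G, treeDist d σ τ ≤ ε) → σ ∈ G

/-- The closure of `G` for the natural metric. -/
def distClosure {V : ℕ → Type*} (d : ℕ) (G : Set (∀ k, Equiv.Perm (V k))) :
    Set (∀ k, Equiv.Perm (V k)) :=
  {σ | ∀ ε : ℝ, 0 < ε → ∃ τ ∈ G, treeDist d σ τ ≤ ε}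

/-- `|r_n(G)|`: the cardinality of the restriction of `G` to the height-`n` subtree. -/
def levelCard {V : ℕ → Type*} (G : Set (∀ k, Equiv.Perm (V k))) (n : ℕ) : ℕ :=
  Nat.card ((fun (σ : ∀ k, Equiv.Perm (V k)) (k : Fin (n + 1)) => σ k.1) '' G)

end
noncomputable section

/-- A fixed algebraic closure `K̄` of `K`. -/
abbrev Kbar (K : Type*) [Field K] : Type _ := AlgebraicClosure K

/-- The level-`n` vertices of the preimage tree of `α` under `φ`: the set
`φ^{-n}(α)`. -/
abbrev preV {Pts : Type*} (φ : Pts → Pts) (α : Pts) (n : ℕ) : Type _ :=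
  {β : Pts // φ^[n] β = α}

/-- The parent map of the preimage tree: a vertex `β ∈ φ^{-(n+1)}(α)` is joined to
`φ(β) ∈ φ^{-n}(α)`. -/
def preParent {Pts : Type*} (φ : Pts → Pts) (α : Pts) (n : ℕ)
    (β : preV φ α (n + 1)) : preV φ α n :=
  ⟨φ β.1, by have h := β.2; rwa [Function.iterate_succ_apply] at h⟩

/-- The image `G_{φ,α}` of the arboreal Galois representation attached to `(φ, α)` over
the base field `L` (an intermediate field of `K̄/K`): the set of families of level
permutations of the preimage tree induced by elements of `Gal(K̄/L)`, acting on points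
via `act`. -/
def arbGal {K : Type*} [Field K] {Pts : Type*}
    (act : (Kbar K ≃ₐ[K] Kbar K) → Pts → Pts) (L : IntermediateField K (Kbar K))
    (φ : Pts → Pts) (α : Pts) : Set (∀ n, Equiv.Perm (preV φ α n)) :=
  {g | ∃ σ : Kbar K ≃ₐ[K] Kbar K, (∀ x ∈ L, σ x = x) ∧
    ∀ (n : ℕ) (β : preV φ α n), (g n β : Pts) = act σ (β : Pts)}

end
/-- The `m`-torsion subgroup of an abelian group. -/
def torsSub (A : Type*) [AddCommGroup A] (m : ℕ) : AddSubgroup A where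
  carrier := {x | m • x = 0}
  zero_mem' := by simp
  add_mem' := by
    intro a b ha hb
    simp only [Set.mem_setOf_eq] at *
    rw [smul_add, ha, hb, add_zero]
  neg_mem' := by
    intro a ha
    simp only [Set.mem_setOf_eq] at *
    rw [smul_neg, ha, neg_zero]

/-!
For `k ≤ n` the fibre `f^{-k}(0)` is a coset of a subgroup of `A[dⁿ] ≅ (ℤ/dⁿ)²`, because
`ĝ ∘ g = [d]` makes `ker gᵏ` killed by `dᵏ`. A Galois element acts additively and commutes
with `f`, so its action on the first `n` levels is determined by the images of two generators
of `A[dⁿ]` and, on each level, by the translation `σ b - b ∈ A[dⁿ]` of one point `b` of the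
fibre. Hence `N_{ε_n}(G) ≤ d^{O(n²)}`, whereas `log (1/ε_n) ≥ 2ⁿ⁻¹ log 2`, so
`log N_{ε_n}(G) / log (1/ε_n) → 0`.
-/

lemma treeScale_pos (d n : ℕ) : 0 < treeScale d n :=
  inv_pos.mpr (pow_pos (mod_cast d.factorial_pos) _)

lemma treeDist_le_of_agreeUpTo {V : ℕ → Type*} {d n : ℕ} {σ τ : ∀ k, Equiv.Perm (V k)}
    (h : AgreeUpTo n σ τ) : treeDist d σ τ ≤ treeScale d n := by
  refine csInf_le ⟨0, ?_⟩ ⟨n, h, rfl⟩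
  rintro _ ⟨j, -, rfl⟩
  exact (treeScale_pos d j).le

lemma coverNum_le_card {V : ℕ → Type*} {d n : ℕ} {G : Set (∀ k, Equiv.Perm (V k))}
    {P : Type*} [Fintype P] (S : P → Set (∀ k, Equiv.Perm (V k))) (hG : G ⊆ ⋃ p, S p)
    (hS : ∀ p, ∀ σ ∈ S p, ∀ τ ∈ S p, AgreeUpTo n σ τ) :
    coverNum d G n ≤ Fintype.card P := by
  let center : P → ∀ k, Equiv.Perm (V k) := fun p => if h : (S p).Nonempty then h.some else 1
  have hcover : G ⊆ ⋃ σ ∈ Finset.univ.image center, {τ | treeDist d σ τ ≤ treeScale d n} := by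
    intro τ hτ
    obtain ⟨p, hp⟩ := Set.mem_iUnion.mp (hG hτ)
    have hne : (S p).Nonempty := ⟨τ, hp⟩
    refine Set.mem_iUnion₂.mpr ⟨center p, Finset.mem_image_of_mem _ (Finset.mem_univ p), ?_⟩
    apply treeDist_le_of_agreeUpTo
    simpa only [center, dif_pos hne] using hS p _ hne.some_mem τ hp
  calc coverNum d G n ≤ (Finset.univ.image center).card := Nat.sInf_le ⟨_, rfl, hcover⟩
    _ ≤ Fintype.card P := Finset.card_image_le

lemma log_one_div_treeScale (d n : ℕ) :
    Real.log (1 / treeScale d n) = scaleExp d n * Real.log d.factorial := by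
  rw [treeScale, one_div, inv_inv, Real.log_pow]

lemma two_pow_le_two_mul_scaleExp {d n : ℕ} (hd : 2 ≤ d) (hn : 1 ≤ n) :
    2 ^ n ≤ 2 * scaleExp d n := by
  obtain ⟨i, rfl⟩ := Nat.exists_eq_add_of_le' hn
  have hlast : d ^ i ≤ scaleExp d (i + 1) :=
    Finset.single_le_sum (f := fun t => d ^ t) (fun _ _ => Nat.zero_le _)
      (Finset.self_mem_range_succ i)
  have := Nat.pow_le_pow_left hd i
  rw [pow_succ]
  omega

lemma hasDim_of_tendsto {V : ℕ → Type*} {d : ℕ} {G : Set (∀ k, Equiv.Perm (V k))} {x : ℝ}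
    (h : Filter.Tendsto (fun n => Real.log (coverNum d G n) / Real.log (1 / treeScale d n))
      Filter.atTop (nhds x)) :
    HasDim d G x :=
  ⟨h.liminf_eq, h.limsup_eq⟩

lemma hasDim_zero_of_coverNum_le_pow_sq {V : ℕ → Type*} {d : ℕ} (hd : 2 ≤ d)
    {G : Set (∀ k, Equiv.Perm (V k))} (c : ℕ) (hc : ∀ n, coverNum d G n ≤ c ^ n ^ 2) :
    HasDim d G 0 := by
  apply hasDim_of_tendsto
  have hnum : ∀ n : ℕ, Real.log (coverNum d G n) ≤ n ^ 2 * Real.log c := by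
    intro n
    rcases (coverNum d G n).eq_zero_or_pos with h | h
    · rw [h, Nat.cast_zero, Real.log_zero]
      positivity
    · calc Real.log (coverNum d G n) ≤ Real.log ((c ^ n ^ 2 : ℕ) : ℝ) :=
            Real.log_le_log (mod_cast h) (mod_cast hc n)
        _ = n ^ 2 * Real.log c := by push_cast; rw [Real.log_pow]; push_cast; rfl
  have hden : ∀ n ≥ 1, 2 ^ n / 2 * Real.log 2 ≤ Real.log (1 / treeScale d n) := by
    intro n hn
    rw [log_one_div_treeScale]
    have hexp : (2 : ℝ) ^ n / 2 ≤ scaleExp d n := by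
      have := two_pow_le_two_mul_scaleExp hd hn
      rw [div_le_iff₀ two_pos]
      exact_mod_cast this.trans_eq (mul_comm _ _)
    have hfac : (2 : ℝ) ≤ d.factorial := mod_cast hd.trans (Nat.self_le_factorial d)
    gcongr
  have hbound : ∀ n ≥ 1, Real.log (coverNum d G n) / Real.log (1 / treeScale d n)
      ≤ 2 * Real.log c / Real.log 2 * (n ^ 2 * (1 / 2) ^ n) := by
    intro n hn
    calc Real.log (coverNum d G n) / Real.log (1 / treeScale d n)
        ≤ n ^ 2 * Real.log c / (2 ^ n / 2 * Real.log 2) :=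
          div_le_div₀ (by positivity) (hnum n) (by positivity) (hden n hn)
      _ = 2 * Real.log c / Real.log 2 * (n ^ 2 * (1 / 2) ^ n) := by
          rw [one_div, inv_pow]
          field_simp
  refine squeeze_zero' (Filter.Eventually.of_forall fun n => ?_)
    (Filter.eventually_atTop.mpr ⟨1, hbound⟩) ?_
  · rw [log_one_div_treeScale]
    exact div_nonneg (Real.log_natCast_nonneg _)
      (mul_nonneg (Nat.cast_nonneg _) (Real.log_natCast_nonneg _))
  · simpa using (tendsto_pow_const_mul_const_pow_of_lt_one 2 (by norm_num : (0 : ℝ) ≤ 1 / 2)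
      (by norm_num)).const_mul (2 * Real.log c / Real.log 2)

section Torsion

variable {A : Type*} [AddCommGroup A]

lemma mem_torsSub {m : ℕ} {x : A} : x ∈ torsSub A m ↔ m • x = 0 := Iff.rfl

lemma torsSub_mono {a b : ℕ} (h : a ∣ b) : torsSub A a ≤ torsSub A b := by
  obtain ⟨c, rfl⟩ := h
  intro x hx
  rw [mem_torsSub] at hx ⊢
  rw [mul_comm, mul_smul, hx, smul_zero]

lemma map_mem_torsSub {B : Type*} [AddCommGroup B] (φ : A →+ B) {m : ℕ} {x : A}
    (hx : x ∈ torsSub A m) : φ x ∈ torsSub B m := by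
  rw [mem_torsSub] at hx ⊢
  rw [← map_nsmul, hx, map_zero]

lemma iterate_sub_iterate_of_affine {f : A → A} {g : A →+ A} {T : A} (hf : ∀ P, f P = g P + T)
    (k : ℕ) (x y : A) : f^[k] x - f^[k] y = (⇑g)^[k] (x - y) := by
  induction k with
  | zero => rfl
  | succ k ih =>
    rw [Function.iterate_succ_apply', Function.iterate_succ_apply',
      Function.iterate_succ_apply', hf, hf, ← ih, map_sub]
    abel

lemma iterate_eq_zero_imp_mem_torsSub {g gd : A →+ A} {d : ℕ} (hgd : ∀ P, gd (g P) = d • P)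
    {k : ℕ} {x : A} (hx : (⇑g)^[k] x = 0) : x ∈ torsSub A (d ^ k) := by
  induction k generalizing x with
  | zero => simpa [mem_torsSub] using hx
  | succ k ih =>
    rw [Function.iterate_succ_apply] at hx
    have hgx : g (d ^ k • x) = 0 := by rw [map_nsmul]; exact ih hx
    rw [mem_torsSub, pow_succ', mul_smul, ← hgd, hgx, map_zero]

lemma sub_mem_torsSub_of_iterate_eq {f : A → A} {g gd : A →+ A} {T : A} {d : ℕ}
    (hf : ∀ P, f P = g P + T) (hgd : ∀ P, gd (g P) = d • P) {k : ℕ} {x y : A}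
    (h : f^[k] x = f^[k] y) : x - y ∈ torsSub A (d ^ k) := by
  apply iterate_eq_zero_imp_mem_torsSub hgd
  rw [← iterate_sub_iterate_of_affine hf, h, sub_self]

lemma ZMod.prod_eq_zsmul_add_zsmul {m : ℕ} (t : ZMod m × ZMod m) :
    t = (t.1.cast : ℤ) • ((1, 0) : ZMod m × ZMod m) + (t.2.cast : ℤ) • (0, 1) := by
  ext <;> simp

lemma eq_of_eq_on_addEquiv_zmod_prod {B : Type*} [AddGroup B] {H : AddSubgroup A} {m : ℕ}
    (e : H ≃+ ZMod m × ZMod m) {φ ψ : A →+ B}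
    (h₁ : φ (e.symm (1, 0)) = ψ (e.symm (1, 0))) (h₂ : φ (e.symm (0, 1)) = ψ (e.symm (0, 1)))
    {x : A} (hx : x ∈ H) : φ x = ψ x := by
  have hx' : x = e.symm (e ⟨x, hx⟩) := by simp
  rw [hx', ZMod.prod_eq_zsmul_add_zsmul (e ⟨x, hx⟩)]
  simp only [map_add, map_zsmul, AddSubgroup.coe_add, AddSubgroup.coe_zsmul, h₁, h₂]

end Torsion

section Isogeny

variable {A : Type*} [AddCommGroup A] {f : A → A} {g gd : A →+ A} {T : A} {d n : ℕ}

lemma eq_on_iterate_fiber (hf : ∀ P, f P = g P + T) (hgd : ∀ P, gd (g P) = d • P)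
    (e : torsSub A (d ^ n) ≃+ ZMod (d ^ n) × ZMod (d ^ n)) {φ ψ : A →+ A}
    (h₁ : φ (e.symm (1, 0)) = ψ (e.symm (1, 0))) (h₂ : φ (e.symm (0, 1)) = ψ (e.symm (0, 1)))
    {k : ℕ} (hk : k ≤ n) {b β : A} (hβ : f^[k] β = f^[k] b) (hb : φ b = ψ b) : φ β = ψ β := by
  have hmem : β - b ∈ torsSub A (d ^ n) :=
    torsSub_mono (pow_dvd_pow d hk) (sub_mem_torsSub_of_iterate_eq hf hgd hβ)
  have hdiff := eq_of_eq_on_addEquiv_zmod_prod e h₁ h₂ hmem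
  rw [map_sub, map_sub, hb, sub_left_inj] at hdiff
  exact hdiff

lemma coverNum_arbGal_le {K : Type*} [Field K] (hd : 0 < d)
    (act : (Kbar K ≃ₐ[K] Kbar K) → A →+ A) (L : IntermediateField K (Kbar K))
    (hf : ∀ P, f P = g P + T) (hgd : ∀ P, gd (g P) = d • P)
    (hequiv : ∀ σ, Function.Commute f (act σ))
    (e : torsSub A (d ^ n) ≃+ ZMod (d ^ n) × ZMod (d ^ n)) :
    coverNum d (arbGal (fun σ => ⇑(act σ)) L f 0) n ≤ (d ^ n * d ^ n) ^ (n + 3) := by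
  set H := torsSub A (d ^ n)
  have : NeZero (d ^ n) := ⟨(pow_pos hd n).ne'⟩
  have : Fintype H := Fintype.ofEquiv _ e.toEquiv.symm
  let base : ℕ → A := fun k => Classical.epsilon fun β => f^[k] β = 0
  have hbase : ∀ k (β : preV f 0 k), f^[k] (base k) = 0 := fun k β =>
    Classical.epsilon_spec (p := fun β => f^[k] β = 0) ⟨β.1, β.2⟩
  have hshift : ∀ σ, ∀ k ≤ n, ∀ β : preV f 0 k, act σ (base k) - base k ∈ H := by
    intro σ k hk β
    refine torsSub_mono (pow_dvd_pow d hk) (sub_mem_torsSub_of_iterate_eq hf hgd ?_)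
    rw [((hequiv σ).iterate_left k).eq, hbase k β, map_zero]
  let code : (Kbar K ≃ₐ[K] Kbar K) → (H × H) × (Fin (n + 1) → H) := fun σ =>
    ((⟨act σ (e.symm (1, 0)), map_mem_torsSub _ (e.symm (1, 0)).2⟩,
      ⟨act σ (e.symm (0, 1)), map_mem_torsSub _ (e.symm (0, 1)).2⟩),
      fun k => if h : act σ (base k) - base k ∈ H then ⟨_, h⟩ else 0)
  have hcode : ∀ σ σ', code σ = code σ' → ∀ k ≤ n, ∀ β : preV f 0 k,
      act σ β = act σ' β := by
    intro σ σ' hc k hk β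
    have hk' : act σ (base k) - base k = act σ' (base k) - base k := by
      have := congrArg (fun p => (p.2 ⟨k, Nat.lt_succ_of_le hk⟩ : A)) hc
      simpa only [code, dif_pos (hshift σ k hk β), dif_pos (hshift σ' k hk β)] using this
    exact eq_on_iterate_fiber hf hgd e (congrArg (fun p => (p.1.1 : A)) hc)
      (congrArg (fun p => (p.1.2 : A)) hc) hk (β.2.trans (hbase k β).symm)
      (sub_left_inj.mp hk')
  let S : (H × H) × (Fin (n + 1) → H) → Set (∀ k, Equiv.Perm (preV f 0 k)) := fun p =>
    {τ | ∃ σ, (∀ k β, (τ k β : A) = act σ β) ∧ code σ = p}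
  have hcover : arbGal (fun σ => ⇑(act σ)) L f 0 ⊆ ⋃ p, S p := by
    rintro τ ⟨σ, -, hτ⟩
    exact Set.mem_iUnion.mpr ⟨code σ, σ, hτ, rfl⟩
  have hS : ∀ p, ∀ τ ∈ S p, ∀ τ' ∈ S p, AgreeUpTo n τ τ' := by
    rintro p τ ⟨σ, hτ, rfl⟩ τ' ⟨σ', hτ', hc⟩ k hk
    ext β
    rw [hτ, hτ', hcode σ σ' hc.symm k hk β]
  calc coverNum d _ n ≤ Fintype.card ((H × H) × (Fin (n + 1) → H)) :=
        coverNum_le_card S hcover hS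
    _ = (d ^ n * d ^ n) ^ (n + 3) := by
        simp only [Fintype.card_prod, Fintype.card_fun, Fintype.card_fin,
          Fintype.card_congr e.toEquiv, ZMod.card]
        ring

end Isogeny

/-- A complete nonsingular curve of genus `1` over `K` with base point `α ∈ X(K)` is an
elliptic curve with origin `α`; its `K̄`-points form an abelian group `A` on which `Gal(K̄/K)`
acts by additive automorphisms, with `m`-torsion isomorphic to `(ℤ/m)²`. A morphism
`f : X → X` of degree `d` over `K` has the form `f(P) = g(P) + T` for an isogeny `g` with dual
`ĝ`, `ĝ∘g = g∘ĝ = [d]`. -/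
theorem arboreal_genus_one_small_general {K : Type*} [Field K] {d : ℕ}
    (hd : 2 ≤ d) (A : Type*) [AddCommGroup A]
    (act : (Kbar K ≃ₐ[K] Kbar K) →* Multiplicative (AddAut A))
    (htors : ∀ m : ℕ, 0 < m → Nonempty (torsSub A m ≃+ ZMod m × ZMod m))
    (f : A → A) (g : A →+ A) (T : A) (hf : ∀ P : A, f P = g P + T)
    (hequiv : ∀ (σ : Kbar K ≃ₐ[K] Kbar K) (P : A), f (Multiplicative.toAdd (act σ) P) = Multiplicative.toAdd (act σ) (f P))
    (hdual : ∃ gd : A →+ A, (∀ P : A, gd (g P) = d • P) ∧ ∀ P : A, g (gd P) = d • P) :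
    HasDim d (arbGal (K := K) (fun σ => ⇑(Multiplicative.toAdd (act σ))) ⊥ f (0 : A)) 0 := by
  obtain ⟨gd, hgd, -⟩ := hdual
  refine hasDim_zero_of_coverNum_le_pow_sq hd (d ^ 8) fun n => ?_
  obtain ⟨e⟩ := htors (d ^ n) (by positivity)
  calc coverNum d _ n ≤ (d ^ n * d ^ n) ^ (n + 3) :=
        coverNum_arbGal_le (by omega) (fun σ => (Multiplicative.toAdd (act σ)).toAddMonoidHom) ⊥
          hf hgd hequiv e
    _ = d ^ (2 * n * (n + 3)) := by ring
    _ ≤ (d ^ 8) ^ n ^ 2 := by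
        rw [← pow_mul]
        exact Nat.pow_le_pow_right (by omega) (by nlinarith [Nat.le_self_pow two_ne_zero n])

/-- **Genus one curves have small arboreal image.**  A complete nonsingular curve of
genus `1` over `K` with the base point `α ∈ X(K)` is an elliptic curve with origin
`α`; its `K̄`-points form an abelian group `A` on which `Gal(K̄/K)` acts by additive
automorphisms, with `m`-torsion subgroup isomorphic to `(ℤ/m)²`.  A morphism
`f : X → X` of degree `d` defined over `K` is of the form `f(P) = g(P) + T` for an
isogeny `g` admitting a dual `ĝ` with `ĝ∘g = g∘ĝ = [d]`.  Conclusion: the Minkowski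
dimension of `G_{f,α}` exists and is `0`. -/
theorem arboreal_genus_one_small {K : Type*} [Field K] [NumberField K] {d : ℕ}
    (hd : 2 ≤ d) (A : Type*) [AddCommGroup A]
    (act : (Kbar K ≃ₐ[K] Kbar K) →* Multiplicative (AddAut A))
    (fod : A → IntermediateField K (Kbar K))
    (fod_fin : ∀ P : A, FiniteDimensional K (fod P))
    (fod_spec : ∀ (σ : Kbar K ≃ₐ[K] Kbar K) (P : A), Multiplicative.toAdd (act σ) P = P ↔ ∀ x ∈ fod P, σ x = x)
    (htors : ∀ m : ℕ, 0 < m → Nonempty (torsSub A m ≃+ ZMod m × ZMod m))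
    (f : A → A) (g : A →+ A) (T : A) (hf : ∀ P : A, f P = g P + T)
    (hequiv : ∀ (σ : Kbar K ≃ₐ[K] Kbar K) (P : A), f (Multiplicative.toAdd (act σ) P) = Multiplicative.toAdd (act σ) (f P))
    (hdual : ∃ gd : A →+ A, (∀ P : A, gd (g P) = d • P) ∧ ∀ P : A, g (gd P) = d • P) :
    HasDim d (arbGal (K := K) (fun σ => ⇑(Multiplicative.toAdd (act σ))) ⊥ f (0 : A)) 0 :=
  arboreal_genus_one_small_general hd A act htors f g T hf hequiv hdual
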